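/- arXiv:1501.01957 — 2 statements merged into one kernel-verified Lean document; each statement's English description precedes it below -/
import Mathlib

section
/- Integral formula for products of determinants (Lemma 1). Let a < b be reals, let m ≥ n ≥ 1 be integers, let f_1,…,f_m and g_1,…,g_n be real-valued integrable functions on [a,b) such that each product f_i·g_j is integrable on [a,b), and let c_{ij} (1 ≤ i ≤ m, n+1 ≤ j ≤ m) be real constants. For x_1,…,x_n ∈ [a,b), let A(x_1,…,x_n) be the m×m matrix with A_{ij} = f_i(x_j) for 1 ≤ j ≤ n and A_{ij} = c_{ij} for n+1 ≤ j ≤ m, and let B(x_1,…,x_n) be the n×n matrix with B_{ij} = g_i(x_j). Let E be the m×m matrix with E_{ij} = ∫_a^b f_i(x) g_j(x) dx for 1 ≤ j ≤ n and E_{ij} = c_{ij} for n+1 ≤ j ≤ m. Then ∫…∫ over the ordered region a ≤ x_n ≤ x_{n−1} ≤ … ≤ x_1 < b of det A(x_1,…,x_n)·det B(x_1,…,x_n) dx_1 … dx_n equals det E. -/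
/-!
Permuting the variables by `π` multiplies both `det A` and `det B` by `sign π`, so the integrand
is symmetric. Up to the null set of points with two equal coordinates, the cube `[a, b)ⁿ` is the
disjoint union of the `n!` images of the ordered simplex under coordinate permutations, so the
integral over the cube is `n!` times the integral over the simplex. On the cube, expand `det B` by
Leibniz and absorb `∏ⱼ g_{σ j}(x_j)` into the columns of `A`: the `j`-th column of the resulting
determinant depends on `x_j` alone, so Fubini integrates it column by column to `sign σ • det E`.
Summing over `σ` gives `n! · det E`.
-/

open MeasureTheory Finset Equiv Matrix
open scoped Nat

namespace Matrix

variable {R : Type*} [CommRing R] {m n : ℕ}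

/-- In the notation of the statement, `A(x) = c.updateLeftCols (fun i j => f i (x j))` and
`E = c.updateLeftCols (fun i j => ∫ f i * g j)`. -/
def updateLeftCols (c : Matrix (Fin m) (Fin m) R) (M : Matrix (Fin m) (Fin n) R) :
    Matrix (Fin m) (Fin m) R :=
  of fun i j => if h : (j : ℕ) < n then M i ⟨j, h⟩ else c i j

theorem det_updateLeftCols (hnm : n ≤ m) (c : Matrix (Fin m) (Fin m) R)
    (M : Matrix (Fin m) (Fin n) R) :
    (c.updateLeftCols M).det = ∑ τ : Perm (Fin m), ((Perm.sign τ : ℤ) : R) *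
      ((∏ i ∈ univ.filter (fun i : Fin m => n ≤ (i : ℕ)), c (τ i) i) *
        ∏ j : Fin n, M (τ (Fin.castLE hnm j)) j) := by
  rw [det_apply']
  refine sum_congr rfl fun τ _ => ?_
  have hleft : univ.filter (fun i : Fin m => ¬ n ≤ (i : ℕ)) = univ.map (Fin.castLEEmb hnm) := by
    ext i
    simpa using ⟨fun h => ⟨⟨i, h⟩, rfl⟩, by rintro ⟨j, rfl⟩; exact j.2⟩
  rw [← prod_filter_not_mul_prod_filter univ (fun i : Fin m => n ≤ (i : ℕ)), hleft, prod_map,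
    mul_comm (∏ j : Fin n, _)]
  congr 2
  · exact prod_congr rfl fun i hi => by simp_all [updateLeftCols]
  · exact prod_congr rfl fun j _ => by simp [updateLeftCols]

theorem det_updateLeftCols_mul_prod (hnm : n ≤ m) (c : Matrix (Fin m) (Fin m) R)
    (M : Matrix (Fin m) (Fin n) R) (d : Fin n → R) :
    (c.updateLeftCols M).det * ∏ j, d j = (c.updateLeftCols (of fun i j => M i j * d j)).det := by
  simp only [det_updateLeftCols hnm, sum_mul, of_apply, prod_mul_distrib, mul_assoc]

theorem det_updateLeftCols_submatrix (hnm : n ≤ m) (c : Matrix (Fin m) (Fin m) R)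
    (M : Matrix (Fin m) (Fin n) R) (π : Perm (Fin n)) :
    (c.updateLeftCols (M.submatrix id π)).det = Perm.sign π * (c.updateLeftCols M).det := by
  have hπ : c.updateLeftCols (M.submatrix id π) =
      (c.updateLeftCols M).submatrix id (π.extendDomain (Fin.castLEquiv hnm)) := by
    ext i j
    by_cases h : (j : ℕ) < n
    · rw [submatrix_apply, Perm.extendDomain_apply_subtype (b := j) _ _ h]
      simp [updateLeftCols, h]
    · rw [submatrix_apply, Perm.extendDomain_apply_not_subtype (b := j) _ _ h]
      simp [updateLeftCols, h]
  rw [hπ, det_permute', Perm.sign_extendDomain]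

theorem det_updateLeftCols_mul_det (hnm : n ≤ m) (c : Matrix (Fin m) (Fin m) R)
    (M : Matrix (Fin m) (Fin n) R) (N : Matrix (Fin n) (Fin n) R) :
    (c.updateLeftCols M).det * N.det = ∑ σ : Perm (Fin n),
      ((Perm.sign σ : ℤ) : R) * (c.updateLeftCols (of fun i j => M i j * N (σ j) j)).det := by
  simp only [det_apply' N, mul_sum, mul_left_comm _ ((Perm.sign _ : ℤ) : R),
    det_updateLeftCols_mul_prod hnm]

theorem det_updateLeftCols_submatrix_mul_det_submatrix (hnm : n ≤ m)
    (c : Matrix (Fin m) (Fin m) R) (M : Matrix (Fin m) (Fin n) R) (N : Matrix (Fin n) (Fin n) R)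
    (π : Perm (Fin n)) :
    (c.updateLeftCols (M.submatrix id π)).det * (N.submatrix id π).det =
      (c.updateLeftCols M).det * N.det := by
  rw [det_updateLeftCols_submatrix hnm, det_permute', mul_mul_mul_comm, ← Int.cast_mul,
    Int.units_coe_mul_self, Int.cast_one, one_mul]

end Matrix

section PiProduct

variable {ι X 𝕜 : Type*} [Fintype ι] [RCLike 𝕜] [MeasurableSpace X] {μ : ι → Measure X}
  [∀ i, SigmaFinite (μ i)] {s : ι → Set X} {f : ι → X → 𝕜}

theorem integrableOn_univ_pi_prod (hf : ∀ i, IntegrableOn (f i) (s i) (μ i)) :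
    IntegrableOn (fun x => ∏ i, f i (x i)) (Set.univ.pi s) (Measure.pi μ) := by
  rw [IntegrableOn, Measure.restrict_pi_pi]
  exact Integrable.fintype_prod hf

theorem setIntegral_univ_pi_prod (s : ι → Set X) (f : ι → X → 𝕜) :
    ∫ x in Set.univ.pi s, ∏ i, f i (x i) ∂Measure.pi μ = ∏ i, ∫ t in s i, f i t ∂μ i := by
  rw [Measure.restrict_pi_pi, integral_fintype_prod_eq_prod]

end PiProduct

section DetIntegral

variable {m n : ℕ} {X 𝕜 : Type*} [RCLike 𝕜] [MeasurableSpace X] {μ : Fin n → Measure X}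
  [∀ j, SigmaFinite (μ j)] {s : Fin n → Set X} {h : Fin m → Fin n → X → 𝕜}

theorem integrableOn_det_updateLeftCols (hnm : n ≤ m) (c : Matrix (Fin m) (Fin m) 𝕜)
    (hh : ∀ i j, IntegrableOn (h i j) (s j) (μ j)) :
    IntegrableOn (fun x => (c.updateLeftCols (of fun i j => h i j (x j))).det) (Set.univ.pi s)
      (Measure.pi μ) := by
  simp only [det_updateLeftCols hnm, of_apply]
  exact integrable_finsetSum _ fun τ _ =>
    (integrableOn_univ_pi_prod fun j => hh _ j).const_mul _ |>.const_mul _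

theorem setIntegral_det_updateLeftCols (hnm : n ≤ m) (c : Matrix (Fin m) (Fin m) 𝕜)
    (hh : ∀ i j, IntegrableOn (h i j) (s j) (μ j)) :
    ∫ x in Set.univ.pi s, (c.updateLeftCols (of fun i j => h i j (x j))).det ∂Measure.pi μ =
      (c.updateLeftCols (of fun i j => ∫ t in s j, h i j t ∂μ j)).det := by
  simp only [det_updateLeftCols hnm, of_apply]
  rw [integral_finsetSum _ fun τ _ =>
    (integrableOn_univ_pi_prod fun j => hh _ j).const_mul _ |>.const_mul _]
  simp only [integral_const_mul, setIntegral_univ_pi_prod]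

end DetIntegral

section DetMulDet

variable {m n : ℕ} {X 𝕜 : Type*} [RCLike 𝕜] [MeasurableSpace X] {μ : Measure X} [SigmaFinite μ]
  {S : Set X} {f : Fin m → X → 𝕜} {g : Fin n → X → 𝕜}

theorem integrableOn_det_mul_det (hnm : n ≤ m) (c : Matrix (Fin m) (Fin m) 𝕜)
    (hfg : ∀ i j, IntegrableOn (fun t => f i t * g j t) S μ) :
    IntegrableOn (fun x => (c.updateLeftCols (of fun i j => f i (x j))).det *
      (of fun i j => g i (x j)).det) (Set.univ.pi fun _ => S) (Measure.pi fun _ => μ) := by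
  simp only [det_updateLeftCols_mul_det hnm, of_apply]
  exact integrable_finsetSum _ fun σ _ =>
    (integrableOn_det_updateLeftCols hnm c fun i j => hfg i (σ j)).const_mul _

theorem setIntegral_det_mul_det (hnm : n ≤ m) (c : Matrix (Fin m) (Fin m) 𝕜)
    (hfg : ∀ i j, IntegrableOn (fun t => f i t * g j t) S μ) :
    ∫ x in Set.univ.pi fun _ => S, (c.updateLeftCols (of fun i j => f i (x j))).det *
      (of fun i j => g i (x j)).det ∂(Measure.pi fun _ => μ) =
      (n ! : 𝕜) * (c.updateLeftCols (of fun i j => ∫ t in S, f i t * g j t ∂μ)).det := by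
  simp only [det_updateLeftCols_mul_det hnm, of_apply]
  rw [integral_finsetSum _ fun σ _ =>
    (integrableOn_det_updateLeftCols hnm c fun i j => hfg i (σ j)).const_mul _]
  calc ∑ σ : Perm (Fin n), ∫ x in Set.univ.pi fun _ => S, ((Perm.sign σ : ℤ) : 𝕜) *
        (c.updateLeftCols (of fun i j => f i (x j) * g (σ j) (x j))).det ∂(Measure.pi fun _ => μ)
      = ∑ σ : Perm (Fin n), ((Perm.sign σ : ℤ) : 𝕜) * ((Perm.sign σ : ℤ) : 𝕜) *
          (c.updateLeftCols (of fun i j => ∫ t in S, f i t * g j t ∂μ)).det := by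
        refine sum_congr rfl fun σ _ => ?_
        rw [integral_const_mul, setIntegral_det_updateLeftCols hnm c fun i j => hfg i (σ j),
          mul_assoc]
        exact congrArg _
          (det_updateLeftCols_submatrix hnm c (of fun i j => ∫ t in S, f i t * g j t ∂μ) σ)
    _ = (n ! : 𝕜) * (c.updateLeftCols (of fun i j => ∫ t in S, f i t * g j t ∂μ)).det := by
        simp only [← Int.cast_mul, Int.units_coe_mul_self, Int.cast_one, one_mul, sum_const,
          card_univ, Fintype.card_perm, Fintype.card_fin, nsmul_eq_mul]

end DetMulDet

theorem ae_injective (n : ℕ) : ∀ᵐ x : Fin n → ℝ, Function.Injective x := by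
  have hne : ∀ i j : Fin n, ∀ᵐ x : Fin n → ℝ, i ≠ j → x i ≠ x j := by
    intro i j
    by_cases hij : i = j
    · simp [hij]
    let L : (Fin n → ℝ) →ₗ[ℝ] ℝ := (LinearMap.proj i : (Fin n → ℝ) →ₗ[ℝ] ℝ) - LinearMap.proj j
    have hL : LinearMap.ker L ≠ ⊤ := by
      intro h
      have : Pi.single i (1 : ℝ) ∈ LinearMap.ker L := h ▸ Submodule.mem_top
      simp [L, Ne.symm hij] at this
    refine (measure_eq_zero_iff_ae_notMem.1 (Measure.addHaar_submodule volume _ hL)).mono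
      fun x hx _ hxij => hx ?_
    simpa [L, sub_eq_zero] using hxij
  filter_upwards [ae_all_iff.2 fun i => ae_all_iff.2 (hne i)] with x hx i j hxij
  by_contra hij
  exact hx i j hij hxij

section Symmetrization

variable {n : ℕ} {E : Type*} [NormedAddCommGroup E] [NormedSpace ℝ E] {S : Set ℝ}
  {F : (Fin n → ℝ) → E}

theorem exists_perm_antitone_comp {α : Type*} [LinearOrder α] (x : Fin n → α) :
    ∃ π : Perm (Fin n), Antitone (x ∘ π) :=
  ⟨Fin.revPerm.trans (Tuple.sort x), (Tuple.monotone_sort x).comp_antitone Fin.rev_anti⟩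

theorem setIntegral_univ_pi_eq_factorial_smul_setIntegral_antitone (hS : MeasurableSet S)
    (hF : ∀ (π : Perm (Fin n)) x, F (x ∘ π) = F x)
    (hFi : IntegrableOn F (Set.univ.pi fun _ => S)) :
    ∫ x in Set.univ.pi fun _ => S, F x = n ! • ∫ x in {x | Antitone x ∧ ∀ i, x i ∈ S}, F x := by
  set A := {x : Fin n → ℝ | Antitone x ∧ ∀ i, x i ∈ S}
  let e : Perm (Fin n) → (Fin n → ℝ) ≃ᵐ (Fin n → ℝ) := fun π =>
    MeasurableEquiv.arrowCongr' π.symm (MeasurableEquiv.refl ℝ)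
  have he : ∀ π x, e π x = x ∘ π := fun _ _ => rfl
  have hA : MeasurableSet A := by
    have hcube : MeasurableSet {x : Fin n → ℝ | ∀ i, x i ∈ S} := by measurability
    exact isClosed_antitone.measurableSet.inter hcube
  have hcover : ⋃ π, e π ⁻¹' A = Set.univ.pi fun _ => S := by
    ext x
    simp only [Set.mem_iUnion, Set.mem_preimage, he, A, Set.mem_ofPred_eq, Function.comp_apply,
      Set.mem_univ_pi]
    refine ⟨fun ⟨π, _, hx⟩ i => by simpa using hx (π.symm i), fun hx => ?_⟩
    obtain ⟨π, hπ⟩ := exists_perm_antitone_comp x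
    exact ⟨π, hπ, fun i => hx (π i)⟩
  have hdisj : Pairwise (Function.onFun (AEDisjoint volume) fun π => e π ⁻¹' A) := by
    intro π π' hne
    refine measure_eq_zero_iff_ae_notMem.2 ((ae_injective n).mono fun x hx ⟨h, h'⟩ => hne ?_)
    exact Perm.ext fun i => hx (congrFun (Tuple.unique_antitone h.1 h'.1) i)
  have hpiece : ∀ π, ∫ x in e π ⁻¹' A, F x = ∫ x in A, F x := fun π => by
    have he_pres : MeasurePreserving (e π) := volume_preserving_arrowCongr' _ _ (.id _)
    rw [← he_pres.setIntegral_preimage_emb (e π).measurableEmbedding F A]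
    exact setIntegral_congr_fun ((e π).measurable hA) fun x _ => (hF π x).symm
  rw [← hcover, integral_iUnion_ae (fun π => ((e π).measurable hA).nullMeasurableSet) hdisj
    (hcover ▸ hFi), tsum_fintype, sum_congr rfl fun π _ => hpiece π, sum_const, card_univ,
    Fintype.card_perm, Fintype.card_fin]

end Symmetrization

theorem integral_det_mul_det_general
    (a b : ℝ) (m n : ℕ) (hnm : n ≤ m)
    (f : Fin m → ℝ → ℝ) (g : Fin n → ℝ → ℝ)
    (hfg : ∀ i j, IntegrableOn (fun x => f i x * g j x) (Set.Ico a b))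
    (c : Fin m → Fin m → ℝ) :
    (∫ x in {x : Fin n → ℝ | Antitone x ∧ ∀ i, x i ∈ Set.Ico a b},
        Matrix.det (Matrix.of fun i j : Fin m =>
          if h : (j : ℕ) < n then f i (x ⟨j, h⟩) else c i j)
        * Matrix.det (Matrix.of fun i j : Fin n => g i (x j)))
      = Matrix.det (Matrix.of fun i j : Fin m =>
          if h : (j : ℕ) < n then ∫ y in Set.Ico a b, f i y * g ⟨j, h⟩ y else c i j) := by
  have hcube := setIntegral_det_mul_det (μ := volume) hnm c hfg
  rw [← volume_pi, setIntegral_univ_pi_eq_factorial_smul_setIntegral_antitone measurableSet_Ico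
    (fun π x => det_updateLeftCols_submatrix_mul_det_submatrix hnm c (of fun i j => f i (x j))
      (of fun i j => g i (x j)) π)
    (integrableOn_det_mul_det hnm c hfg), nsmul_eq_mul] at hcube
  exact mul_left_cancel₀ (Nat.cast_ne_zero.2 n.factorial_ne_zero) hcube

/-- **Lemma 1** (integral formula for products of determinants). The integral of
`det A(x) · det B(x)` over the ordered region `a ≤ x_n ≤ … ≤ x_1 < b` equals `det E`,
where the first `n` columns of `E` contain the integrals `∫_a^b f_i g_j` and the remaining
columns the constants `c_{ij}`. -/
theorem integral_det_mul_det
    (a b : ℝ) (hab : a < b) (m n : ℕ) (hn : 1 ≤ n) (hnm : n ≤ m)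
    (f : Fin m → ℝ → ℝ) (g : Fin n → ℝ → ℝ)
    (hf : ∀ i, IntegrableOn (f i) (Set.Ico a b))
    (hg : ∀ j, IntegrableOn (g j) (Set.Ico a b))
    (hfg : ∀ i j, IntegrableOn (fun x => f i x * g j x) (Set.Ico a b))
    (c : Fin m → Fin m → ℝ) :
    (∫ x in {x : Fin n → ℝ | Antitone x ∧ ∀ i, x i ∈ Set.Ico a b},
        Matrix.det (Matrix.of fun i j : Fin m =>
          if h : (j : ℕ) < n then f i (x ⟨j, h⟩) else c i j)
        * Matrix.det (Matrix.of fun i j : Fin n => g i (x j)))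
      = Matrix.det (Matrix.of fun i j : Fin m =>
          if h : (j : ℕ) < n then ∫ y in Set.Ico a b, f i y * g ⟨j, h⟩ y else c i j) :=
  integral_det_mul_det_general a b m n hnm f g hfg c
end

section
/- Limit of a determinant divided by a Vandermonde determinant under eigenvalue coalescence (Lemma 2). Let m > n ≥ 1 be integers and let a_1 > a_2 > … > a_n be fixed reals. Let f_1,…,f_m be real functions that are (m−n−1)-times continuously differentiable on a neighborhood of a real point a_0 with a_0 < a_n, and defined at a_1,…,a_n. For a decreasing tuple a_1 > … > a_n > a_{n+1} > … > a_m, let A = diag(a_1,…,a_m) and let C be the m×m matrix with C_{ij} = f_i(a_j). Let E be the m×m matrix with E_{ij} = f_i(a_j) for 1 ≤ j ≤ n and E_{ij} = f_i^{(m−j)}(a_0) for n+1 ≤ j ≤ m, where f^{(k)} denotes the k-th derivative. Then, as (a_{n+1},…,a_m) → (a_0,…,a_0) within the region a_n > a_{n+1} > … > a_m, the ratio det C / Δ(A) converges to det E / ( Γ_{m−n}·κ(A_0 − a_0 I_n, m−n) ), where A_0 := diag(a_1,…,a_n). -/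
/-!
Write `b = (a_{n+1}, …, a_m)` for the coalescing tail and `q = m - n`. Multiplying the columns
`f(b_1), …, f(b_q)` of `C` on the right by a triangular matrix of determinant `1 / Δ(b)` turns
column `c` into the divided difference `f[b_c, …, b_q]`, while
`Δ(A) = Δ(A₀) · ∏ (a_i - b_c) · Δ(b)`. So `Δ(b)` cancels and only the divided differences move
as `b → a₀`. By the mean value theorem for divided differences (Lagrange interpolation plus
Rolle's theorem applied `q - c` times), `f[b_c, …, b_q] = f^{(q-c)}(ξ) / (q-c)!` for some `ξ`
between the nodes, so the column tends to `f^{(q-c)}(a₀) / (q-c)!`; the factorials multiply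
to `Γ_q`.
-/

open MeasureTheory Matrix BigOperators Finset Filter Topology

noncomputable section

/-- `Γ_n = ∏_{i=1}^n Γ(i)` (with `Γ_0 = 1`). -/
def Gs (n : ℕ) : ℝ := ∏ i ∈ Finset.range n, Real.Gamma (i + 1)

/-- The Vandermonde product `Δ` of a tuple. -/
def vdm {n : ℕ} (a : Fin n → ℝ) : ℝ :=
  ∏ p ∈ Finset.univ.filter (fun p : Fin n × Fin n => p.1 < p.2), (a p.1 - a p.2)

/-- `κ(A, k) = Δ(A) · det(A)^k`, via the tuple of diagonal entries/eigenvalues of `A`. -/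
def kap {n : ℕ} (a : Fin n → ℝ) (k : ℕ) : ℝ := vdm a * (∏ i, a i) ^ k

/-- Concatenation of the fixed head `a : Fin n → ℝ` and the tail `b : Fin (m−n) → ℝ`
into a full tuple `Fin m → ℝ`. -/
def joinTup (n m : ℕ) (a : Fin n → ℝ) (b : Fin (m - n) → ℝ) : Fin m → ℝ :=
  fun i => if h : (i : ℕ) < n then a ⟨i, h⟩
    else b ⟨(i : ℕ) - n, by have := i.isLt; omega⟩

open Polynomial
open scoped Nat

theorem Polynomial.iteratedDeriv_eval {𝕜 : Type*} [NontriviallyNormedField 𝕜] (p : 𝕜[X])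
    (k : ℕ) (x : 𝕜) : iteratedDeriv k (fun x => p.eval x) x = (derivative^[k] p).eval x := by
  have h : Function.Semiconj (fun (q : 𝕜[X]) (x : 𝕜) => q.eval x) derivative deriv :=
    fun q => by ext y; exact (Polynomial.deriv (p := q) (x := y)).symm
  rw [iteratedDeriv_eq_iterate, ← h.iterate_right k p]

theorem exists_iteratedDeriv_eq_zero_of_strictMono {k : ℕ} {g : ℝ → ℝ} {lo hi : ℝ}
    (hg : ContDiffOn ℝ k g (Set.Ioo lo hi)) {t : Fin (k + 1) → ℝ} (ht : StrictMono t)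
    (ht_mem : ∀ i, t i ∈ Set.Ioo lo hi) (hgt : ∀ i, g (t i) = 0) :
    ∃ ξ ∈ Set.Ioo lo hi, iteratedDeriv k g ξ = 0 := by
  induction k generalizing g with
  | zero => exact ⟨t 0, ht_mem 0, hgt 0⟩
  | succ k ih =>
    have hrolle : ∀ r : Fin (k + 1),
        ∃ u ∈ Set.Ioo (t r.castSucc) (t r.succ), deriv g u = 0 := fun r =>
      exists_deriv_eq_zero (ht Fin.castSucc_lt_succ)
        (hg.continuousOn.mono (Set.Icc_subset_Ioo (ht_mem _).1 (ht_mem _).2))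
        (by rw [hgt, hgt])
    choose u hu hu_zero using hrolle
    have hu_mono : StrictMono u := fun r r' hrr' =>
      calc u r < t r.succ := (hu r).2
        _ ≤ t r'.castSucc := ht.monotone (Fin.succ_le_castSucc_iff.2 hrr')
        _ < u r' := (hu r').1
    have hg' : ContDiffOn ℝ k (deriv g) (Set.Ioo lo hi) :=
      hg.deriv_of_isOpen isOpen_Ioo (by norm_cast)
    obtain ⟨ξ, hξ, hξ_zero⟩ := ih hg' hu_mono
      (fun r => ⟨(ht_mem _).1.trans (hu r).1, (hu r).2.trans (ht_mem _).2⟩) hu_zero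
    exact ⟨ξ, hξ, by rwa [iteratedDeriv_succ']⟩

def dividedDiff {ι : Type*} [DecidableEq ι] (f : ℝ → ℝ) (s : Finset ι) (v : ι → ℝ) : ℝ :=
  ∑ i ∈ s, f (v i) / ∏ j ∈ s.erase i, (v i - v j)

theorem exists_dividedDiff_eq_iteratedDeriv_div_factorial {ι : Type*} [DecidableEq ι]
    {k : ℕ} {f : ℝ → ℝ} {lo hi : ℝ} (hf : ContDiffOn ℝ k f (Set.Ioo lo hi))
    {s : Finset ι} (hs : #s = k + 1) {v : ι → ℝ} (hv : Set.InjOn v s)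
    (hv_mem : ∀ i ∈ s, v i ∈ Set.Ioo lo hi) :
    ∃ ξ ∈ Set.Ioo lo hi, dividedDiff f s v = iteratedDeriv k f ξ / k ! := by
  set P := Lagrange.interpolate s v (fun i => f (v i))
  have hP_node : ∀ i ∈ s, P.eval (v i) = f (v i) := fun i hi =>
    Lagrange.eval_interpolate_at_node _ hv hi
  have hP_deriv : ∀ x, iteratedDeriv k (fun x => P.eval x) x = k ! * dividedDiff f s v := by
    intro x
    rw [Polynomial.iteratedDeriv_eval, Lagrange.eval_iterate_derivative_eq_sum hv
      (Lagrange.degree_interpolate_lt _ hv) (by omega), hs, Nat.sub_self]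
    simp only [powersetCard_zero, sum_singleton, prod_empty, mul_one, dividedDiff]
    exact congrArg _ (sum_congr rfl fun i hi => by rw [hP_node i hi])
  have hs_image : #(s.image v) = k + 1 := by rw [card_image_of_injOn hv, hs]
  set t := (s.image v).orderEmbOfFin hs_image
  have ht_node : ∀ r, ∃ i ∈ s, v i = t r := fun r =>
    mem_image.1 ((s.image v).orderEmbOfFin_mem hs_image r)
  have hP_smooth : ContDiff ℝ k fun x => P.eval x := by simpa using P.contDiff_aeval (𝕜 := ℝ) k
  obtain ⟨ξ, hξ, hξ_zero⟩ := exists_iteratedDeriv_eq_zero_of_strictMono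
    (hf.sub hP_smooth.contDiffOn) t.strictMono
    (fun r => by obtain ⟨i, hi, hit⟩ := ht_node r; exact hit ▸ hv_mem i hi)
    (fun r => by obtain ⟨i, hi, hit⟩ := ht_node r; simp [← hit, hP_node i hi])
  refine ⟨ξ, hξ, ?_⟩
  rw [← Pi.sub_def, iteratedDeriv_sub (hf.contDiffAt (Ioo_mem_nhds hξ.1 hξ.2))
    hP_smooth.contDiffAt, sub_eq_zero, hP_deriv] at hξ_zero
  rw [hξ_zero]
  field_simp

theorem tendsto_dividedDiff {ι : Type*} [DecidableEq ι] {k : ℕ} {f : ℝ → ℝ} {x₀ : ℝ}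
    (hf : ContDiffAt ℝ k f x₀) {s : Finset ι} (hs : #s = k + 1) :
    Tendsto (dividedDiff f s) (𝓝[{v | Set.InjOn v s}] fun _ => x₀)
      (𝓝 (iteratedDeriv k f x₀ / k !)) := by
  obtain ⟨u, hu, hf_on⟩ := hf.contDiffOn le_rfl (by simp)
  have hcont : ContinuousAt (iteratedDeriv k f) x₀ := by
    obtain ⟨w, hwu, hw_open, hx₀w⟩ := mem_nhds_iff.1 hu
    have hw := (hf_on.mono hwu).continuousOn_iteratedDerivWithin le_rfl hw_open.uniqueDiffOn
    exact (hw.congr fun x hx => (iteratedDerivWithin_of_isOpen hw_open hx).symm).continuousAt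
      (hw_open.mem_nhds hx₀w)
  rw [tendsto_def]
  intro U hU
  obtain ⟨δ, hδ, hball⟩ := Metric.mem_nhds_iff.1
    (inter_mem hu ((hcont.div_const _).preimage_mem_nhds hU))
  rw [Real.ball_eq_Ioo] at hball
  have hnodes : ∀ᶠ v : ι → ℝ in 𝓝 fun _ => x₀, ∀ i ∈ s, v i ∈ Set.Ioo (x₀ - δ) (x₀ + δ) :=
    (eventually_all_finset s).2 fun i _ =>
      (continuous_apply i).continuousAt.preimage_mem_nhds
        (Ioo_mem_nhds (by linarith) (by linarith))
  filter_upwards [nhdsWithin_le_nhds hnodes, self_mem_nhdsWithin] with v hv_mem hv_inj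
  obtain ⟨ξ, hξ, hξ_eq⟩ := exists_dividedDiff_eq_iteratedDeriv_div_factorial
    (hf_on.mono fun x hx => (hball hx).1) hs hv_inj hv_mem
  rw [Set.mem_preimage, hξ_eq]
  exact (hball hξ).2

theorem vdm_eq_prod_Ioi {n : ℕ} (v : Fin n → ℝ) : vdm v = ∏ i, ∏ j ∈ Ioi i, (v i - v j) :=
  prod_finset_product _ _ _ (by simp)

theorem vdm_eq_prod_ite {n : ℕ} (v : Fin n → ℝ) :
    vdm v = ∏ i, ∏ j, if i < j then v i - v j else 1 := by
  rw [vdm, prod_filter, ← Fintype.prod_prod_type']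

theorem vdm_ne_zero {n : ℕ} {v : Fin n → ℝ} (hv : Function.Injective v) : vdm v ≠ 0 :=
  prod_ne_zero_iff.2 fun _ hp => sub_ne_zero.2 (hv.ne (mem_filter.1 hp).2.ne)

theorem vdm_sub_const {n : ℕ} (v : Fin n → ℝ) (c : ℝ) : vdm (fun i => v i - c) = vdm v :=
  prod_congr rfl fun _ _ => sub_sub_sub_cancel_right _ _ _

theorem vdm_append {n q : ℕ} (a : Fin n → ℝ) (b : Fin q → ℝ) :
    vdm (Fin.append a b) = vdm a * (∏ i, ∏ c, (a i - b c)) * vdm b := by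
  have hlt : ∀ (i : Fin n) (c : Fin q), Fin.castAdd q i < Fin.natAdd n c := fun i c => by
    simp only [Fin.lt_def, Fin.val_castAdd, Fin.val_natAdd]; omega
  have hnlt : ∀ (c : Fin q) (i : Fin n), ¬ Fin.natAdd n c < Fin.castAdd q i := fun c i =>
    (hlt i c).asymm
  simp only [vdm_eq_prod_ite, Fin.prod_univ_add, Fin.append_left, Fin.append_right, hlt, hnlt,
    (Fin.strictMono_castAdd q).lt_iff_lt, Fin.natAdd_lt_natAdd_iff, prod_mul_distrib, if_true,
    if_false, prod_const_one, mul_one]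
  ring

def dividedDiffMatrix {q : ℕ} (b : Fin q → ℝ) : Matrix (Fin q) (Fin q) ℝ :=
  of fun r c => if c ≤ r then (∏ l ∈ (Ici c).erase r, (b r - b l))⁻¹ else 0

theorem mul_dividedDiffMatrix {ι : Type*} {q : ℕ} (F : ι → ℝ → ℝ) (b : Fin q → ℝ) :
    (of fun i r => F i (b r)) * dividedDiffMatrix b =
      of fun i c => dividedDiff (F i) (Ici c) b := by
  ext i c
  simp only [mul_apply, of_apply, dividedDiffMatrix, mul_ite, mul_zero, ← sum_filter,
    filter_le_eq_Ici, dividedDiff, div_eq_mul_inv]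

theorem det_dividedDiffMatrix {q : ℕ} (b : Fin q → ℝ) : (dividedDiffMatrix b).det = (vdm b)⁻¹ := by
  have hlower : (dividedDiffMatrix b).IsLowerTriangular := fun r c hrc => if_neg hrc.not_ge
  rw [det_of_isLowerTriangular _ hlower, vdm_eq_prod_Ioi, ← prod_inv_distrib]
  refine prod_congr rfl fun r _ => ?_
  simp [dividedDiffMatrix, Ici_erase]

theorem det_fromCols_dividedDiff_mul_vdm {κ : Type*} [Fintype κ] [DecidableEq κ] {q : ℕ}
    (A : Matrix (κ ⊕ Fin q) κ ℝ) (F : κ ⊕ Fin q → ℝ → ℝ) {b : Fin q → ℝ}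
    (hb : Function.Injective b) :
    (fromCols A (of fun i c => dividedDiff (F i) (Ici c) b)).det * vdm b =
      (fromCols A (of fun i c => F i (b c))).det := by
  calc (fromCols A (of fun i c => dividedDiff (F i) (Ici c) b)).det * vdm b
      = (fromCols A (of fun i c => F i (b c)) * fromBlocks 1 0 0 (dividedDiffMatrix b)).det
          * vdm b := by
        rw [fromCols_mul_fromBlocks, ← mul_dividedDiffMatrix]
        simp
    _ = (fromCols A (of fun i c => F i (b c))).det := by
        rw [det_mul, det_fromBlocks_zero₂₁, det_one, one_mul, det_dividedDiffMatrix,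
          inv_mul_cancel_right₀ (vdm_ne_zero hb)]

theorem det_fromCols_div {R κ ι : Type*} [Field R] [Fintype κ] [Fintype ι] [DecidableEq κ]
    [DecidableEq ι] (A : Matrix (κ ⊕ ι) κ R) (Y : Matrix (κ ⊕ ι) ι R) (w : ι → R) :
    (fromCols A (of fun i c => Y i c / w c)).det = (fromCols A Y).det / ∏ c, w c := by
  have hscale : fromCols A (of fun i c => Y i c / w c) =
      of fun i j => Sum.elim (fun _ => 1) (fun c => (w c)⁻¹) j * fromCols A Y i j := by
    ext i (j | c) <;> simp [div_eq_inv_mul]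
  rw [hscale, det_mul_row, Fintype.prod_sum_type]
  simp [prod_inv_distrib, div_eq_inv_mul]

theorem Gs_eq_prod_factorial (q : ℕ) : Gs q = ∏ c : Fin q, ((q - 1 - c)! : ℝ) := by
  rw [Gs, Fin.prod_univ_eq_prod_range (fun i => ((q - 1 - i)! : ℝ)) q,
    prod_range_reflect (fun i => (i ! : ℝ)) q]
  exact prod_congr rfl fun i _ => Real.Gamma_nat_eq_factorial i

theorem tendsto_det_fromCols_div_vdm {κ : Type*} [Fintype κ] [DecidableEq κ] {q : ℕ}
    (A : Matrix (κ ⊕ Fin q) κ ℝ) {F : κ ⊕ Fin q → ℝ → ℝ} {x₀ : ℝ}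
    (hF : ∀ i, ContDiffAt ℝ (q - 1 : ℕ) (F i) x₀) :
    Tendsto (fun b : Fin q → ℝ => (fromCols A (of fun i c => F i (b c))).det / vdm b)
      (𝓝[{b | Function.Injective b}] fun _ => x₀)
      (𝓝 ((fromCols A (of fun i (c : Fin q) => iteratedDeriv (q - 1 - c) (F i) x₀)).det /
        Gs q)) := by
  have hreduce : (fun b => (fromCols A (of fun i c => dividedDiff (F i) (Ici c) b)).det)
      =ᶠ[𝓝[{b | Function.Injective b}] fun _ => x₀]
        fun b => (fromCols A (of fun i c => F i (b c))).det / vdm b := by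
    filter_upwards [self_mem_nhdsWithin] with b hb
    rw [← det_fromCols_dividedDiff_mul_vdm A F hb, mul_div_cancel_right₀ _ (vdm_ne_zero hb)]
  have hcols : Tendsto (fun b => fromCols A (of fun i c => dividedDiff (F i) (Ici c) b))
      (𝓝[{b | Function.Injective b}] fun _ => x₀)
      (𝓝 (fromCols A
        (of fun i (c : Fin q) => iteratedDeriv (q - 1 - c) (F i) x₀ / (q - 1 - c)!))) := by
    refine tendsto_pi_nhds.2 fun i => tendsto_pi_nhds.2 ?_
    rintro (j | c)
    · exact tendsto_const_nhds
    · exact (tendsto_dividedDiff ((hF i).of_le (by norm_cast; omega))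
        (by rw [Fin.card_Ici]; omega)).mono_left (nhdsWithin_mono _ fun b hb => hb.injOn)
  rw [Gs_eq_prod_factorial, ← det_fromCols_div]
  exact (((continuous_id.matrix_det).tendsto _).comp hcols).congr' hreduce

theorem joinTup_eq_append {n m : ℕ} (h : m = n + (m - n)) (a : Fin n → ℝ)
    (b : Fin (m - n) → ℝ) : joinTup n m a b = Fin.append a b ∘ Fin.cast h := by
  ext j
  obtain ⟨x, rfl⟩ := (finCongr h.symm).surjective j
  simp only [Function.comp_apply, finCongr_apply, Fin.cast_cast, Fin.cast_eq_self]
  refine Fin.addCases (fun i => ?_) (fun c => ?_) x <;> simp [joinTup]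

theorem vdm_comp_cast {p p' : ℕ} (h : p = p') (v : Fin p' → ℝ) :
    vdm (v ∘ Fin.cast h) = vdm v := by
  subst h
  rfl

theorem vdm_joinTup {n m : ℕ} (hnm : n ≤ m) (a : Fin n → ℝ) (b : Fin (m - n) → ℝ) :
    vdm (joinTup n m a b) = vdm a * (∏ i, ∏ c, (a i - b c)) * vdm b := by
  rw [joinTup_eq_append (by omega), vdm_comp_cast, vdm_append]

def finSumFinSubEquiv {n m : ℕ} (h : n ≤ m) : Fin n ⊕ Fin (m - n) ≃ Fin m :=
  finSumFinEquiv.trans (finCongr (Nat.add_sub_of_le h))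

@[simp]
theorem val_finSumFinSubEquiv_inl {n m : ℕ} (h : n ≤ m) (i : Fin n) :
    (finSumFinSubEquiv h (.inl i) : ℕ) = i := rfl

@[simp]
theorem val_finSumFinSubEquiv_inr {n m : ℕ} (h : n ≤ m) (c : Fin (m - n)) :
    (finSumFinSubEquiv h (.inr c) : ℕ) = n + c := rfl

theorem det_joinTup_eq_det_fromCols {n m : ℕ} (h : n ≤ m) (f : Fin m → ℝ → ℝ) (a : Fin n → ℝ)
    (b : Fin (m - n) → ℝ) :
    (of fun i j : Fin m => f i (joinTup n m a b j)).det =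
      (fromCols (of fun i j => f (finSumFinSubEquiv h i) (a j))
        (of fun i c => f (finSumFinSubEquiv h i) (b c))).det := by
  rw [← det_submatrix_equiv_self (finSumFinSubEquiv h)]
  congr 1
  ext i (j | c) <;> simp [joinTup]

theorem det_dite_eq_det_fromCols {n m : ℕ} (h : n ≤ m) (g : Fin m → Fin n → ℝ)
    (D : Fin m → ℕ → ℝ) :
    (of fun i j : Fin m => if hj : (j : ℕ) < n then g i ⟨j, hj⟩ else D i (m - (j + 1))).det =
      (fromCols (of fun i j => g (finSumFinSubEquiv h i) j)
        (of fun i (c : Fin (m - n)) => D (finSumFinSubEquiv h i) (m - n - 1 - c))).det := by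
  rw [← det_submatrix_equiv_self (finSumFinSubEquiv h)]
  congr 1
  ext i (j | c)
  · simp
  · simp [show m - (n + c + 1) = m - n - 1 - c by omega]

theorem det_div_vandermonde_tendsto_general
    (m n : ℕ) (hnm : n < m)
    (a : Fin n → ℝ) (ha : StrictAnti a) (a0 : ℝ) (ha0 : ∀ j, a0 < a j)
    (f : Fin m → ℝ → ℝ)
    (hf : ∀ i, ContDiffAt ℝ (m - n - 1 : ℕ) (f i) a0) :
    Tendsto
      (fun btail : Fin (m - n) → ℝ =>
        Matrix.det (Matrix.of fun i j : Fin m => f i (joinTup n m a btail j))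
          / vdm (joinTup n m a btail))
      (𝓝[{btail : Fin (m - n) → ℝ | StrictAnti btail ∧ ∀ i j, btail i < a j}]
        (fun _ => a0))
      (𝓝 (Matrix.det (Matrix.of fun i j : Fin m =>
            if h : (j : ℕ) < n then f i (a ⟨j, h⟩)
            else iteratedDeriv (m - ((j : ℕ) + 1)) (f i) a0)
          / (Gs (m - n) * kap (fun j => a j - a0) (m - n)))) := by
  set e := finSumFinSubEquiv hnm.le
  have hS : {b : Fin (m - n) → ℝ | StrictAnti b ∧ ∀ i j, b i < a j} ⊆
      {b | Function.Injective b} := fun b hb => hb.1.injective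
  have hblock := (tendsto_det_fromCols_div_vdm (of fun i j => f (e i) (a j))
    fun i => hf (e i)).mono_left (nhdsWithin_mono _ hS)
  have hcross : Tendsto (fun b : Fin (m - n) → ℝ => vdm a * ∏ i, ∏ c, (a i - b c))
      (𝓝 fun _ => a0) (𝓝 (vdm a * ∏ i, ∏ _c : Fin (m - n), (a i - a0))) :=
    (by fun_prop : Continuous fun b : Fin (m - n) → ℝ => vdm a * ∏ i, ∏ c, (a i - b c)).tendsto _
  have hcross_ne : vdm a * ∏ i, ∏ _c : Fin (m - n), (a i - a0) ≠ 0 :=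
    mul_ne_zero (vdm_ne_zero ha.injective)
      (prod_ne_zero_iff.2 fun i _ => prod_ne_zero_iff.2 fun _ _ => sub_ne_zero.2 (ha0 i).ne')
  have hκ : kap (fun j => a j - a0) (m - n) = vdm a * ∏ i, ∏ _c : Fin (m - n), (a i - a0) := by
    simp [kap, vdm_sub_const, prod_pow]
  convert hblock.div (hcross.mono_left nhdsWithin_le_nhds) hcross_ne using 2
  · rw [Pi.div_apply, det_joinTup_eq_det_fromCols hnm.le, vdm_joinTup hnm.le]
    ring
  · rw [det_dite_eq_det_fromCols hnm.le (fun i j => f i (a j)) fun i k => iteratedDeriv k (f i) a0,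
      hκ]
    ring

/-- **Lemma 2** (limit of a determinant divided by a Vandermonde determinant under
eigenvalue coalescence). As the last `m − n` arguments tend to `a0` within the ordered
region, `det C / Δ(A)` converges to `det E / (Γ_{m−n} · κ(A₀ − a₀ I, m−n))`. -/
theorem det_div_vandermonde_tendsto
    (m n : ℕ) (hn : 1 ≤ n) (hnm : n < m)
    (a : Fin n → ℝ) (ha : StrictAnti a) (a0 : ℝ) (ha0 : ∀ j, a0 < a j)
    (f : Fin m → ℝ → ℝ)
    (hf : ∀ i, ContDiffAt ℝ (m - n - 1 : ℕ) (f i) a0) :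
    Tendsto
      (fun btail : Fin (m - n) → ℝ =>
        Matrix.det (Matrix.of fun i j : Fin m => f i (joinTup n m a btail j))
          / vdm (joinTup n m a btail))
      (𝓝[{btail : Fin (m - n) → ℝ | StrictAnti btail ∧ ∀ i j, btail i < a j}]
        (fun _ => a0))
      (𝓝 (Matrix.det (Matrix.of fun i j : Fin m =>
            if h : (j : ℕ) < n then f i (a ⟨j, h⟩)
            else iteratedDeriv (m - ((j : ℕ) + 1)) (f i) a0)
          / (Gs (m - n) * kap (fun j => a j - a0) (m - n)))) :=
  det_div_vandermonde_tendsto_general m n hnm a ha a0 ha0 f hf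
end
end
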